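/- Let G be a connected graph on m ≥ 2 vertices and H a κ-regular graph on n vertices. Then the corona G⊙H belongs to the QE class (i.e., QEC(G⊙H) ≤ 0) if and only if G belongs to the QE class (QEC(G) ≤ 0) and min ev(A_H) ≥ −2. -/

import Mathlib

open Matrix BigOperators

/-- The join `K₁ + H` of a single vertex (labelled `none`) with `H`. -/
def joinOne {V₂ : Type*} (H : SimpleGraph V₂) : SimpleGraph (Option V₂) where
  Adj i j := (∃ a b, i = some a ∧ j = some b ∧ H.Adj a b) ∨
    (i = none ∧ j ≠ none) ∨ (i ≠ none ∧ j = none)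
  symm := by
    refine ⟨?_⟩
    rintro i j (⟨a, b, ha, hb, hab⟩ | ⟨h1, h2⟩ | ⟨h1, h2⟩)
    · exact Or.inl ⟨b, a, hb, ha, hab.symm⟩
    · exact Or.inr (Or.inr ⟨h2, h1⟩)
    · exact Or.inr (Or.inl ⟨h2, h1⟩)
  loopless := by
    refine ⟨?_⟩
    rintro i (⟨a, b, ha, hb, hab⟩ | ⟨h1, h2⟩ | ⟨h1, h2⟩)
    · rw [ha] at hb; injection hb with h; subst h; exact H.loopless.irrefl _ hab
    · exact h2 h1
    · exact h1 h2

/-- The corona graph `G ⊙ H`, on vertex set `V₁ × ({o} ∪ V₂)` with `o = none`. -/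
def corona {V₁ V₂ : Type*} (G : SimpleGraph V₁) (H : SimpleGraph V₂) :
    SimpleGraph (V₁ × Option V₂) where
  Adj p q := (p.2 = none ∧ q.2 = none ∧ G.Adj p.1 q.1) ∨
    (p.1 = q.1 ∧ (joinOne H).Adj p.2 q.2)
  symm := by
    refine ⟨?_⟩
    rintro p q (⟨h1, h2, h3⟩ | ⟨h1, h2⟩)
    · exact Or.inl ⟨h2, h1, h3.symm⟩
    · exact Or.inr ⟨h1.symm, (joinOne H).adj_symm h2⟩
  loopless := by
    refine ⟨?_⟩
    rintro p (⟨_, _, h⟩ | ⟨_, h⟩)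
    · exact G.loopless.irrefl _ h
    · exact (joinOne H).loopless.irrefl _ h

/-- The distance matrix of a graph, with real entries. -/
noncomputable def distMatrix {V : Type*} (G : SimpleGraph V) : Matrix V V ℝ :=
  fun x y => (G.dist x y : ℝ)

/-- The quadratic embedding constant of a graph:
`QEC(G) = max {⟨f, D f⟩ : ⟨f,f⟩ = 1, ⟨1,f⟩ = 0}`. -/
noncomputable def QEC {V : Type*} [Fintype V] (G : SimpleGraph V) : ℝ :=
  sSup {r : ℝ | ∃ f : V → ℝ, (∑ x, f x * f x) = 1 ∧ (∑ x, f x) = 0 ∧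
    r = f ⬝ᵥ (distMatrix G).mulVec f}

/-!
In `G ⊙ H` two vertices in different fibres are joined through their hubs, while inside a fibre the
distance is that of `K₁ + H`, namely `2 - 2δ - A_H` on the copy of `H`. So `D_{G⊙H}` has the shape
`D_G ⊗ J + ε 1ᵀ + 1 εᵀ - I ⊗ M`, with `ε` the depth below the hub and `M` equal to `2I + A_H` padded
by zeros. For `∑ f = 0` the rank-one terms drop out and
`⟨f, D_{G⊙H} f⟩ = ⟨s, D_G s⟩ - ∑ᵤ ⟨fᵤ, (2I + A_H) fᵤ⟩`, `s` being the fibre sums. Testing with `f`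
supported on the hubs, or on one fibre balanced by its hub, shows that this is `≤ 0` for all such
`f` iff `D_G` is conditionally negative semidefinite and `2I + A_H ⪰ 0`, i.e. `min ev(A_H) ≥ -2`.
-/

namespace SimpleGraph

variable {V : Type*} {G : SimpleGraph V}

lemma Adj.dist_le_dist_add_one {x z : V} (h : G.Adj x z) (y : V) :
    G.dist x y ≤ G.dist z y + 1 := by
  have := h.reachable.dist_triangle_left y
  rw [dist_eq_one_iff_adj.2 h] at this
  omega

lemma Walk.apply_le_apply_add_length {c : V → ℕ} (hc : ∀ x z, G.Adj x z → c x ≤ c z + 1)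
    {x y : V} (p : G.Walk x y) : c x ≤ c y + p.length := by
  induction p with
  | nil => simp
  | cons h _ ih =>
    rw [Walk.length_cons]
    have := hc _ _ h
    omega

lemma Reachable.apply_le_apply_add_dist {c : V → ℕ} (hc : ∀ x z, G.Adj x z → c x ≤ c z + 1)
    {x y : V} (h : G.Reachable x y) : c x ≤ c y + G.dist x y := by
  obtain ⟨p, hp⟩ := h.exists_walk_length_eq_dist
  exact hp ▸ p.apply_le_apply_add_length hc

end SimpleGraph

namespace Matrix

variable {V W : Type*} [Fintype V] [Fintype W]

def CondNegSemidef (D : Matrix V V ℝ) : Prop :=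
  ∀ f : V → ℝ, ∑ x, f x = 0 → f ⬝ᵥ D *ᵥ f ≤ 0

lemma bddAbove_quadForm_sphere (D : Matrix V V ℝ) :
    BddAbove {r : ℝ | ∃ f : V → ℝ, (∑ x, f x * f x) = 1 ∧ r = f ⬝ᵥ D *ᵥ f} := by
  refine ⟨∑ x, ∑ y, |D x y|, ?_⟩
  rintro r ⟨f, hf1, rfl⟩
  have hf : ∀ x, |f x| ≤ 1 := fun x => abs_le_one_iff_mul_self_le_one.2 <|
    hf1 ▸ Finset.single_le_sum (fun y _ => mul_self_nonneg (f y)) (Finset.mem_univ x)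
  simp only [dotProduct, mulVec, Finset.mul_sum]
  refine Finset.sum_le_sum fun x _ => Finset.sum_le_sum fun y _ => ?_
  calc f x * (D x y * f y) ≤ |f x| * (|D x y| * |f y|) := by
        rw [← abs_mul, ← abs_mul]; exact le_abs_self _
    _ ≤ 1 * (|D x y| * 1) := by gcongr <;> simp [hf]
    _ = |D x y| := by ring

lemma sSup_quadForm_nonpos_iff_condNegSemidef (D : Matrix V V ℝ) :
    sSup {r : ℝ | ∃ f : V → ℝ, (∑ x, f x * f x) = 1 ∧ (∑ x, f x) = 0 ∧
      r = f ⬝ᵥ D *ᵥ f} ≤ 0 ↔ D.CondNegSemidef := by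
  set S := {r : ℝ | ∃ f : V → ℝ, (∑ x, f x * f x) = 1 ∧ (∑ x, f x) = 0 ∧ r = f ⬝ᵥ D *ᵥ f}
  have hS : BddAbove S := (bddAbove_quadForm_sphere D).mono <| by
    rintro r ⟨f, hf1, -, rfl⟩
    exact ⟨f, hf1, rfl⟩
  refine ⟨fun h f hf0 => ?_, fun h => Real.sSup_nonpos fun _ ⟨f, _, hf0, hr⟩ => hr ▸ h f hf0⟩
  by_cases hf : f = 0
  · simp [hf]
  set c := ∑ x, f x * f x
  have hc : 0 < c := by
    obtain ⟨x, hx⟩ := Function.ne_iff.1 hf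
    exact Finset.sum_pos' (fun y _ => mul_self_nonneg (f y)) ⟨x, by simp, mul_self_pos.2 hx⟩
  have hsq : (√c)⁻¹ * (√c)⁻¹ = c⁻¹ := by rw [← mul_inv, Real.mul_self_sqrt hc.le]
  have hmem : c⁻¹ * (f ⬝ᵥ D *ᵥ f) ∈ S := by
    refine ⟨(√c)⁻¹ • f, ?_, ?_, ?_⟩
    · simp only [Pi.smul_apply, smul_eq_mul, mul_mul_mul_comm _ (f _), ← Finset.mul_sum, hsq]
      exact inv_mul_cancel₀ hc.ne'
    · simp [← Finset.mul_sum, hf0]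
    · rw [smul_dotProduct, mulVec_smul, dotProduct_smul, smul_eq_mul, smul_eq_mul,
        ← mul_assoc, hsq]
  exact nonpos_of_mul_nonpos_right ((le_csSup hS hmem).trans h) (inv_pos.2 hc)

def extendByZero (B : Matrix W W ℝ) : Matrix (Option W) (Option W) ℝ
  | some a, some b => B a b
  | _, _ => 0

lemma dotProduct_mulVec_extendByZero (B : Matrix W W ℝ) (g : Option W → ℝ) :
    g ⬝ᵥ B.extendByZero *ᵥ g = (fun a => g (some a)) ⬝ᵥ B *ᵥ (fun a => g (some a)) := by
  simp [dotProduct, mulVec, Fintype.sum_option, extendByZero]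

/-- `D₀ ⊗ J + ℓ 1ᵀ + 1 ℓᵀ - I ⊗ M`. -/
def coronaForm [DecidableEq V] (D₀ : Matrix V V ℝ) (ℓ : W → ℝ) (M : Matrix W W ℝ) :
    Matrix (V × W) (V × W) ℝ :=
  fun p q => D₀ p.1 q.1 + ℓ p.2 + ℓ q.2 - if p.1 = q.1 then M p.2 q.2 else 0

lemma dotProduct_coronaForm_mulVec [DecidableEq V] (D₀ : Matrix V V ℝ) (ℓ : W → ℝ)
    (M : Matrix W W ℝ) {f : V × W → ℝ} (hf : ∑ p, f p = 0) :
    f ⬝ᵥ coronaForm D₀ ℓ M *ᵥ f =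
      (fun u => ∑ α, f (u, α)) ⬝ᵥ D₀ *ᵥ (fun u => ∑ α, f (u, α)) -
        ∑ u, (fun α => f (u, α)) ⬝ᵥ M *ᵥ (fun α => f (u, α)) := by
  set s : V → ℝ := fun u => ∑ α, f (u, α)
  have hf' : ∑ v, ∑ β, f (v, β) = 0 := by rwa [← Fintype.sum_prod_type]
  have hmul : ∀ u α, (coronaForm D₀ ℓ M *ᵥ f) (u, α) =
      (D₀ *ᵥ s) u + ∑ q, ℓ q.2 * f q - (M *ᵥ fun β => f (u, β)) α := by
    intro u α
    simp only [mulVec, dotProduct, coronaForm, Fintype.sum_prod_type, add_mul, sub_mul,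
      ite_mul, zero_mul, Finset.sum_add_distrib, Finset.sum_sub_distrib, Finset.sum_ite_irrel,
      Finset.sum_const_zero, Finset.sum_ite_eq, Finset.mem_univ, if_true, ← Finset.mul_sum, hf',
      mul_zero, add_zero, s]
  simp only [dotProduct, Fintype.sum_prod_type, hmul, mul_add, mul_sub, Finset.sum_add_distrib,
    Finset.sum_sub_distrib, ← Finset.sum_mul, hf', zero_mul, add_zero, s]

lemma condNegSemidef_coronaForm_iff [DecidableEq V] [Nonempty V] (D₀ : Matrix V V ℝ)
    (ℓ : Option W → ℝ) (B : Matrix W W ℝ) :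
    (coronaForm D₀ ℓ B.extendByZero).CondNegSemidef ↔
      D₀.CondNegSemidef ∧ ∀ x : W → ℝ, 0 ≤ x ⬝ᵥ B *ᵥ x := by
  have key : ∀ f : V × Option W → ℝ, ∑ p, f p = 0 → f ⬝ᵥ coronaForm D₀ ℓ B.extendByZero *ᵥ f =
      (fun u => ∑ α, f (u, α)) ⬝ᵥ D₀ *ᵥ (fun u => ∑ α, f (u, α)) -
        ∑ u, (fun a => f (u, some a)) ⬝ᵥ B *ᵥ (fun a => f (u, some a)) := fun f hf => by
    simp only [dotProduct_coronaForm_mulVec _ _ _ hf, dotProduct_mulVec_extendByZero]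
  constructor
  · intro h
    constructor
    · intro g hg
      have hf : ∑ p : V × Option W, Option.elim p.2 (g p.1) 0 = 0 := by
        simpa [Fintype.sum_prod_type, Fintype.sum_option] using hg
      simpa [key _ hf, Fintype.sum_option] using h _ hf
    · intro x
      obtain ⟨u₀⟩ := ‹Nonempty V›
      set f : V × Option W → ℝ := fun p => if p.1 = u₀ then p.2.elim (-∑ a, x a) x else 0
      have hs : ∀ u, ∑ α, f (u, α) = 0 := fun u => by
        by_cases hu : u = u₀ <;> simp [f, hu, Fintype.sum_option]
      have hq : ∀ u, (fun a => f (u, some a)) ⬝ᵥ B *ᵥ (fun a => f (u, some a)) =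
          if u = u₀ then x ⬝ᵥ B *ᵥ x else 0 := fun u => by
        by_cases hu : u = u₀ <;> simp [f, hu]
      have hf : ∑ p, f p = 0 := by simp [Fintype.sum_prod_type, hs]
      simpa [key _ hf, hs, hq] using h _ hf
  · rintro ⟨h₀, hB⟩ f hf
    rw [key f hf, sub_nonpos]
    have hs : ∑ u, ∑ α, f (u, α) = 0 := by rwa [← Fintype.sum_prod_type]
    exact (h₀ _ hs).trans (Finset.sum_nonneg fun u _ => hB _)

end Matrix

namespace Matrix.IsHermitian

variable {n : Type*} [Fintype n] [DecidableEq n] {A : Matrix n n ℝ}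

lemma mul_dotProduct_self_le (hA : A.IsHermitian) {μ : ℝ}
    (hμ : ∀ θ : ℝ, (∃ x : n → ℝ, x ≠ 0 ∧ A *ᵥ x = θ • x) → μ ≤ θ) (x : n → ℝ) :
    μ * (x ⬝ᵥ x) ≤ x ⬝ᵥ A *ᵥ x := by
  have hB : (A - μ • 1).IsHermitian := hA.sub (by simp [IsHermitian])
  have hpsd : (A - μ • 1).PosSemidef := hB.posSemidef_iff_eigenvalues_nonneg.2 fun i => by
    rw [Pi.zero_apply]
    have hv := hB.mulVec_eigenvectorBasis i
    rw [sub_mulVec, smul_mulVec, one_mulVec, sub_eq_iff_eq_add, ← add_smul] at hv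
    have hne : (hB.eigenvectorBasis i : n → ℝ) ≠ 0 :=
      fun h => hB.eigenvectorBasis.orthonormal.ne_zero i (by simpa using h)
    linarith [hμ _ ⟨_, hne, hv⟩]
  have := hpsd.dotProduct_mulVec_nonneg x
  simp only [star_trivial, sub_mulVec, smul_mulVec, one_mulVec, dotProduct_sub,
    dotProduct_smul, smul_eq_mul] at this
  linarith

lemma forall_mul_dotProduct_self_le_iff (hA : A.IsHermitian) {μ : ℝ}
    (hμ₁ : ∃ x : n → ℝ, x ≠ 0 ∧ A *ᵥ x = μ • x)
    (hμ₂ : ∀ θ : ℝ, (∃ x : n → ℝ, x ≠ 0 ∧ A *ᵥ x = θ • x) → μ ≤ θ) (c : ℝ) :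
    (∀ x : n → ℝ, c * (x ⬝ᵥ x) ≤ x ⬝ᵥ A *ᵥ x) ↔ c ≤ μ := by
  refine ⟨fun h => ?_, fun hc x => ?_⟩
  · obtain ⟨x, hx, hAx⟩ := hμ₁
    have hpos : 0 < x ⬝ᵥ x := by simpa using dotProduct_star_self_pos_iff.2 hx
    have := h x
    rw [hAx, dotProduct_smul, smul_eq_mul] at this
    exact le_of_mul_le_mul_right this hpos
  · have hnn : 0 ≤ x ⬝ᵥ x := by simpa using dotProduct_star_self_nonneg x
    exact (mul_le_mul_of_nonneg_right hc hnn).trans (hA.mul_dotProduct_self_le hμ₂ x)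

end Matrix.IsHermitian

open SimpleGraph

lemma QEC_nonpos_iff {V : Type*} [Fintype V] (G : SimpleGraph V) :
    QEC G ≤ 0 ↔ (distMatrix G).CondNegSemidef :=
  Matrix.sSup_quadForm_nonpos_iff_condNegSemidef _

section Join

variable {W : Type*} (H : SimpleGraph W)

def joinDepth : Option W → ℕ
  | none => 0
  | some _ => 1

lemma joinDepth_le_one (α : Option W) : joinDepth α ≤ 1 := by
  cases α <;> simp [joinDepth]

lemma joinOne_adj_none_some (b : W) : (joinOne H).Adj none (some b) :=
  Or.inr (Or.inl ⟨rfl, by simp⟩)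

@[simp]
lemma joinOne_adj_some_some {a b : W} : (joinOne H).Adj (some a) (some b) ↔ H.Adj a b := by
  simp [joinOne]

lemma joinOne_connected : (joinOne H).Connected :=
  (connected_iff_exists_forall_reachable _).2 ⟨none, fun
    | none => .rfl
    | some b => (joinOne_adj_none_some H b).reachable⟩

lemma joinOne_dist_none (β : Option W) : (joinOne H).dist none β = joinDepth β := by
  cases β with
  | none => simp [joinDepth]
  | some b => simpa [joinDepth] using joinOne_adj_none_some H b

lemma joinOne_dist_some_some_of_not_adj {a b : W} (hne : a ≠ b) (hab : ¬ H.Adj a b) :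
    (joinOne H).dist (some a) (some b) = 2 := by
  refine le_antisymm ?_ ((joinOne_connected H).one_lt_dist_of_ne_of_not_adj (by simpa) (by simpa))
  exact dist_le (.cons (joinOne_adj_none_some H a).symm (.cons (joinOne_adj_none_some H b) .nil))

lemma joinOne_dist_eq [DecidableEq W] [DecidableRel H.Adj] (α β : Option W) :
    ((joinOne H).dist α β : ℝ) =
      joinDepth α + joinDepth β - (H.adjMatrix ℝ + (2 : ℝ) • 1).extendByZero α β := by
  match α, β with
  | none, β => simp [joinOne_dist_none, joinDepth, Matrix.extendByZero]
  | some a, none => simp [dist_comm, joinOne_dist_none, joinDepth, Matrix.extendByZero]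
  | some a, some b =>
    simp only [Matrix.extendByZero, joinDepth, Matrix.add_apply, adjMatrix_apply,
      Matrix.smul_apply, Matrix.one_apply]
    by_cases hab : a = b
    · subst hab; norm_num
    by_cases hadj : H.Adj a b
    · simp [hab, hadj]
    · simp [hab, hadj, joinOne_dist_some_some_of_not_adj H hab hadj]; norm_num

end Join

section Corona

variable {V₁ V₂ : Type*} (G : SimpleGraph V₁) (H : SimpleGraph V₂)

def coronaHub : G →g corona G H where
  toFun u := (u, none)
  map_rel' h := Or.inl ⟨rfl, rfl, h⟩

def coronaFiber (u : V₁) : joinOne H →g corona G H where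
  toFun α := (u, α)
  map_rel' h := Or.inr ⟨rfl, h⟩

variable {G H}

lemma corona_exists_walk_fiber (u : V₁) (α β : Option V₂) :
    ∃ p : (corona G H).Walk (u, α) (u, β), p.length = (joinOne H).dist α β := by
  obtain ⟨p, hp⟩ := (joinOne_connected H).exists_walk_length_eq_dist α β
  exact ⟨p.map (coronaFiber G H u), (Walk.length_map _ _).trans hp⟩

lemma corona_exists_walk_hub (hG : G.Connected) (u v : V₁) :
    ∃ p : (corona G H).Walk (u, none) (v, none), p.length = G.dist u v := by
  obtain ⟨p, hp⟩ := hG.exists_walk_length_eq_dist u v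
  exact ⟨p.map (coronaHub G H), (Walk.length_map _ _).trans hp⟩

variable [DecidableEq V₁]

variable (G H) in
noncomputable def coronaDist (x y : V₁ × Option V₂) : ℕ :=
  if x.1 = y.1 then (joinOne H).dist x.2 y.2 else G.dist x.1 y.1 + joinDepth x.2 + joinDepth y.2

lemma coronaDist_hub (u : V₁) (y : V₁ × Option V₂) :
    coronaDist G H (u, none) y = G.dist u y.1 + joinDepth y.2 := by
  obtain ⟨v, β⟩ := y
  unfold coronaDist
  split_ifs with h
  · obtain rfl : u = v := h
    simp [joinOne_dist_none]
  · simp [joinDepth]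

lemma coronaDist_le_coronaDist_add_one {x z : V₁ × Option V₂} (h : (corona G H).Adj x z)
    (y : V₁ × Option V₂) : coronaDist G H x y ≤ coronaDist G H z y + 1 := by
  obtain ⟨u, α⟩ := x
  obtain ⟨u', γ⟩ := z
  rcases h with ⟨hα, hγ, hG⟩ | ⟨hu, hJ⟩
  · dsimp only at hα hγ hG
    subst hα hγ
    rw [coronaDist_hub, coronaDist_hub]
    have := hG.dist_le_dist_add_one y.1
    omega
  · dsimp only at hu hJ
    subst hu
    unfold coronaDist
    dsimp only
    split_ifs
    · exact hJ.dist_le_dist_add_one y.2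
    · have := joinDepth_le_one α
      omega

lemma exists_walk_length_eq_coronaDist (hG : G.Connected) (x y : V₁ × Option V₂) :
    ∃ p : (corona G H).Walk x y, p.length = coronaDist G H x y := by
  obtain ⟨u, α⟩ := x
  obtain ⟨v, β⟩ := y
  unfold coronaDist
  dsimp only
  split_ifs with huv
  · subst huv
    exact corona_exists_walk_fiber u α β
  · obtain ⟨p, hp⟩ := corona_exists_walk_fiber (G := G) u α none
    obtain ⟨q, hq⟩ := corona_exists_walk_hub (H := H) hG u v
    obtain ⟨r, hr⟩ := corona_exists_walk_fiber (G := G) v none β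
    refine ⟨p.append (q.append r), ?_⟩
    rw [Walk.length_append, Walk.length_append, hp, hq, hr, dist_comm, joinOne_dist_none,
      joinOne_dist_none]
    ring

lemma corona_dist (hG : G.Connected) (x y : V₁ × Option V₂) :
    (corona G H).dist x y = coronaDist G H x y := by
  obtain ⟨p, hp⟩ := exists_walk_length_eq_coronaDist hG x y
  refine le_antisymm (hp ▸ dist_le p) ?_
  simpa [coronaDist] using
    p.reachable.apply_le_apply_add_dist (c := (coronaDist G H · y))
      (fun _ _ h => coronaDist_le_coronaDist_add_one h y)

lemma distMatrix_corona [DecidableEq V₂] [DecidableRel H.Adj] (hG : G.Connected) :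
    distMatrix (corona G H) = Matrix.coronaForm (distMatrix G) (fun α => (joinDepth α : ℝ))
      (H.adjMatrix ℝ + (2 : ℝ) • 1).extendByZero := by
  ext ⟨u, α⟩ ⟨v, β⟩
  simp only [distMatrix, Matrix.coronaForm, corona_dist hG, coronaDist]
  split_ifs with huv
  · simp [huv, joinOne_dist_eq]
  · push_cast
    ring

end Corona

theorem corona_QE_class_iff_general {V₁ V₂ : Type*} [Fintype V₁] [Fintype V₂] [DecidableEq V₂]
    (G : SimpleGraph V₁) (hG : G.Connected)
    (H : SimpleGraph V₂) [DecidableRel H.Adj]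
    (μmin : ℝ)
    (hmin1 : ∃ x : V₂ → ℝ, x ≠ 0 ∧ (H.adjMatrix ℝ).mulVec x = μmin • x)
    (hmin2 : ∀ θ : ℝ, (∃ x : V₂ → ℝ, x ≠ 0 ∧ (H.adjMatrix ℝ).mulVec x = θ • x) → μmin ≤ θ) :
    QEC (corona G H) ≤ 0 ↔ (QEC G ≤ 0 ∧ -2 ≤ μmin) := by
  classical
  have : Nonempty V₁ := hG.nonempty
  have hA : (H.adjMatrix ℝ).IsHermitian := by simp [H.isSymm_adjMatrix]
  rw [QEC_nonpos_iff, QEC_nonpos_iff, distMatrix_corona hG, Matrix.condNegSemidef_coronaForm_iff,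
    ← hA.forall_mul_dotProduct_self_le_iff hmin1 hmin2]
  refine and_congr_right' (forall_congr' fun x => ?_)
  simp only [add_mulVec, smul_mulVec, one_mulVec, dotProduct_add, dotProduct_smul, smul_eq_mul]
  constructor <;> intro h <;> linarith

/-- The corona `G ⊙ H` belongs to the QE class (`QEC(G⊙H) ≤ 0`) if and
only if `G` belongs to the QE class (`QEC(G) ≤ 0`) and `min ev(A_H) ≥ −2`. -/
theorem corona_QE_class_iff {V₁ V₂ : Type*} [Fintype V₁] [Fintype V₂] [DecidableEq V₂]
    (G : SimpleGraph V₁) (hG : G.Connected) (hm : 2 ≤ Fintype.card V₁)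
    (H : SimpleGraph V₂) [DecidableRel H.Adj] (κ : ℕ) (hreg : H.IsRegularOfDegree κ)
    (μmin : ℝ)
    (hmin1 : ∃ x : V₂ → ℝ, x ≠ 0 ∧ (H.adjMatrix ℝ).mulVec x = μmin • x)
    (hmin2 : ∀ θ : ℝ, (∃ x : V₂ → ℝ, x ≠ 0 ∧ (H.adjMatrix ℝ).mulVec x = θ • x) → μmin ≤ θ) :
    QEC (corona G H) ≤ 0 ↔ (QEC G ≤ 0 ∧ -2 ≤ μmin) :=
  corona_QE_class_iff_general G hG H μmin hmin1 hmin2
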